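/- arXiv:1202.6101 — 2 statements merged into one kernel-verified Lean document; each statement's English description precedes it below -/
import Mathlib

section
/- Let E be a real inner product space, let q₀ ∈ E and p₀ ∈ E be nonzero, let ω_q ≥ 0, let R_p ≥ 0, and let φ = angle(q₀, p₀). Then for every unit vector q ∈ E with angle(q₀, q) ≤ ω_q and every point p with ‖p − p₀‖ ≤ R_p, one has ⟪q, p⟫ ≤ ‖p₀‖ · cos(max(φ − ω_q, 0)) + R_p. (Paper's Theorem 3: upper bound on the maximum inner product between any unit-norm query in an open cone of half-aperture ω_q around axis q₀ and any point in the ball B(p₀, R_p).) -/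
/-!
By the triangle inequality for angles, `angle q p₀ ≥ angle q₀ p₀ - angle q₀ q ≥ φ - ω_q`, and cosine
is decreasing on `[0, π]`, so `⟪q, p₀⟫ = ‖p₀‖ cos (angle q p₀) ≤ ‖p₀‖ cos (max (φ - ω_q) 0)`.
Cauchy–Schwarz bounds the remaining term `⟪q, p - p₀⟫` by `R_p`.
-/

open RealInnerProductSpace InnerProductGeometry

namespace InnerProductGeometry

variable {V : Type*} [NormedAddCommGroup V] [InnerProductSpace ℝ V]

theorem sub_le_angle_of_angle_le {x y z : V} {ω : ℝ} (h : angle x y ≤ ω) :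
    angle x z - ω ≤ angle y z := by
  linarith [angle_le_angle_add_angle x y z]

theorem real_inner_le_norm_mul_norm_mul_cos_of_angle_le {x y z : V} {ω : ℝ}
    (h : angle x y ≤ ω) : ⟪y, z⟫ ≤ ‖y‖ * ‖z‖ * Real.cos (max (angle x z - ω) 0) := by
  rw [← cos_angle_mul_norm_mul_norm, mul_comm]
  exact mul_le_mul_of_nonneg_left (Real.cos_le_cos_of_nonneg_of_le_pi (le_max_right _ _)
    (angle_le_pi y z) (max_le (sub_le_angle_of_angle_le h) (angle_nonneg y z))) (by positivity)

end InnerProductGeometry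

theorem cone_ball_mip_bound_general {E : Type*} [NormedAddCommGroup E] [InnerProductSpace ℝ E]
    (q₀ p₀ : E)
    (ωq Rp : ℝ)
    (q : E) (hq : ‖q‖ = 1) (hqangle : angle q₀ q ≤ ωq)
    (p : E) (hp : ‖p - p₀‖ ≤ Rp) :
    ⟪q, p⟫ ≤ ‖p₀‖ * Real.cos (max (angle q₀ p₀ - ωq) 0) + Rp := by
  have hcone : ⟪q, p₀⟫ ≤ ‖p₀‖ * Real.cos (max (angle q₀ p₀ - ωq) 0) := by
    simpa [hq] using real_inner_le_norm_mul_norm_mul_cos_of_angle_le (z := p₀) hqangle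
  have hball : ⟪q, p - p₀⟫ ≤ Rp := by
    calc ⟪q, p - p₀⟫ ≤ ‖q‖ * ‖p - p₀‖ := real_inner_le_norm q (p - p₀)
      _ ≤ Rp := by rwa [hq, one_mul]
  calc ⟪q, p⟫ = ⟪q, p₀⟫ + ⟪q, p - p₀⟫ := by rw [← inner_add_right, add_sub_cancel]
    _ ≤ _ := add_le_add hcone hball

theorem cone_ball_mip_bound {E : Type*} [NormedAddCommGroup E] [InnerProductSpace ℝ E]
    (q₀ p₀ : E) (hq₀ : q₀ ≠ 0) (hp₀ : p₀ ≠ 0)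
    (ωq Rp : ℝ) (hω : 0 ≤ ωq) (hRp : 0 ≤ Rp)
    (q : E) (hq : ‖q‖ = 1) (hqangle : angle q₀ q ≤ ωq)
    (p : E) (hp : ‖p - p₀‖ ≤ Rp) :
    ⟪q, p⟫ ≤ ‖p₀‖ * Real.cos (max (angle q₀ p₀ - ωq) 0) + Rp :=
  cone_ball_mip_bound_general q₀ p₀ ωq Rp q hq hqangle p hp
end

section
/- Let E be a real inner product space and let p₀, q₀, p, q ∈ E be nonzero vectors such that angle(p₀, p) + angle(q₀, q) ≤ angle(p₀, q₀). Then ⟪q, p⟫ ≤ ‖p‖ · ‖q‖ · cos(angle(p₀, q₀) − (angle(p₀, p) + angle(q₀, q))). (This is the two-ball angle bound, derived from the triangle inequality of angles, used in the proof of Theorem 2.) -/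
open RealInnerProductSpace InnerProductGeometry

/-!
Two applications of the triangle inequality for angles, along the path `p₀ → p → q → q₀`,
give `angle p₀ q₀ - (angle p₀ p + angle q₀ q) ≤ angle p q`; as the left side is
nonnegative and cosine is decreasing on `[0, π]`, the bound follows from
`⟪p, q⟫ = ‖p‖ ‖q‖ cos (angle p q)`.
-/

namespace InnerProductGeometry

variable {E : Type*} [NormedAddCommGroup E] [InnerProductSpace ℝ E]

theorem angle_sub_add_le_angle (x y u v : E) :
    angle x y - (angle x u + angle y v) ≤ angle u v := by
  have hxy := angle_le_angle_add_angle x u y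
  have huy := angle_le_angle_add_angle u v y
  linarith [angle_comm v y]

theorem real_inner_le_norm_mul_norm_mul_cos_of_le_angle {x y : E} {θ : ℝ} (hθ : 0 ≤ θ)
    (hθx : θ ≤ angle x y) : ⟪x, y⟫ ≤ ‖x‖ * ‖y‖ * Real.cos θ := by
  rw [← cos_angle_mul_norm_mul_norm, mul_comm]
  gcongr
  exact Real.cos_le_cos_of_nonneg_of_le_pi hθ (angle_le_pi x y) hθx

end InnerProductGeometry

theorem two_ball_angle_bound_general {E : Type*} [NormedAddCommGroup E] [InnerProductSpace ℝ E]
    (p₀ q₀ p q : E)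
    (h : angle p₀ p + angle q₀ q ≤ angle p₀ q₀) :
    ⟪q, p⟫ ≤ ‖p‖ * ‖q‖ * Real.cos (angle p₀ q₀ - (angle p₀ p + angle q₀ q)) := by
  rw [real_inner_comm]
  exact real_inner_le_norm_mul_norm_mul_cos_of_le_angle (sub_nonneg.mpr h)
    (angle_sub_add_le_angle p₀ q₀ p q)

theorem two_ball_angle_bound {E : Type*} [NormedAddCommGroup E] [InnerProductSpace ℝ E]
    (p₀ q₀ p q : E) (hp₀ : p₀ ≠ 0) (hq₀ : q₀ ≠ 0) (hp : p ≠ 0) (hq : q ≠ 0)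
    (h : angle p₀ p + angle q₀ q ≤ angle p₀ q₀) :
    ⟪q, p⟫ ≤ ‖p‖ * ‖q‖ * Real.cos (angle p₀ q₀ - (angle p₀ p + angle q₀ q)) :=
  two_ball_angle_bound_general p₀ q₀ p q h
end
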